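/- Let p be a prime with p > d/2 and let f(z) = z^d + a_{d−1} z^{d−1} + ⋯ + a_1 z ∈ P_d be post-critically bounded. Let c₁ be a critical point of f of maximal absolute value among all critical points, and suppose |c₁| > 1. Then max_{1 ≤ i ≤ d−1} |a_i|^{1/(d−i)} = |c₁|. -/

import Mathlib

/-!
Write `f' = d ∏ (z - cⱼ)`. By Vieta's formulas and the ultrametric inequality,
`|i aᵢ| ≤ |d| |c₁|^(d-i) ≤ |c₁|^(d-i)`, which bounds `|aᵢ|` by `|c₁|^(d-i)` whenever `p ∤ i`;
as `d < 2p`, the only remaining index is `i = p`. Outside the disc of radius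
`R = max (1, maxⱼ |aⱼ|^(1/(d-j)))` the leading term dominates, `|f z| = |z|^d`, and orbits escape.
If `|a_p|` exceeded `|c₁|^(d-p)`, the term `a_p c₁^p` would dominate `f c₁` and push it outside
that disc; if every `|aᵢ|^(1/(d-i))` were below `|c₁|`, then `c₁` itself would lie outside it.
Either way the critical orbit of `c₁` would be unbounded.
-/

open Polynomial

def HasBoundedOrbit {K : Type*} [Norm K] (g : K → K) (z : K) : Prop :=
  ∃ B : ℝ, ∀ n, ‖g^[n] z‖ ≤ B

lemma HasBoundedOrbit.apply {K : Type*} [Norm K] {g : K → K} {z : K} (h : HasBoundedOrbit g z) :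
    HasBoundedOrbit g (g z) :=
  let ⟨B, hB⟩ := h
  ⟨B, fun n => by simpa only [Function.iterate_succ_apply] using hB (n + 1)⟩

lemma not_hasBoundedOrbit_of_expanding {K : Type*} [Norm K] {g : K → K} {t : ℝ} (ht : 1 < t)
    (hg : ∀ z, t ≤ ‖z‖ → t * ‖z‖ ≤ ‖g z‖) {z : K} (hz : t ≤ ‖z‖) :
    ¬ HasBoundedOrbit g z := by
  rintro ⟨B, hB⟩
  have hgrowth : ∀ n, t ^ (n + 1) ≤ ‖g^[n] z‖ := by
    intro n
    induction n with
    | zero => simpa using hz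
    | succ n ih =>
      rw [Function.iterate_succ_apply', pow_succ']
      calc t * t ^ (n + 1) ≤ t * ‖g^[n] z‖ := by gcongr
        _ ≤ ‖g (g^[n] z)‖ := hg _ (le_trans (le_self_pow₀ ht.le n.succ_ne_zero) ih)
  obtain ⟨n, hn⟩ := pow_unbounded_of_one_lt B ht
  have hmono : t ^ n ≤ t ^ (n + 1) := pow_le_pow_right₀ ht.le n.le_succ
  linarith [hgrowth n, hB n]

section Ultrametric

variable {K : Type*} [NormedField K] [IsUltrametricDist K]

lemma norm_eval_eq_of_forall_norm_lt {f : K[X]} {z : K} {j : ℕ}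
    (h : ∀ i ≠ j, ‖f.coeff i * z ^ i‖ < ‖f.coeff j * z ^ j‖) :
    ‖f.eval z‖ = ‖f.coeff j * z ^ j‖ := by
  have hpos : 0 < ‖f.coeff j * z ^ j‖ := (norm_nonneg _).trans_lt (h (j + 1) (by omega))
  have hj : j ∈ f.support := by
    rw [mem_support_iff]
    rintro h0
    simp [h0] at hpos
  have hrest : ‖∑ i ∈ f.support.erase j, f.coeff i * z ^ i‖ < ‖f.coeff j * z ^ j‖ := by
    rcases (f.support.erase j).eq_empty_or_nonempty with he | hne
    · simpa [he] using hpos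
    obtain ⟨i, hi, hle⟩ := IsUltrametricDist.exists_norm_finsetSum_le_of_nonempty hne
      (fun i => f.coeff i * z ^ i)
    exact hle.trans_lt (h i (Finset.ne_of_mem_erase hi))
  rw [eval_eq_sum, Polynomial.sum_def, ← Finset.add_sum_erase _ _ hj,
    IsUltrametricDist.norm_add_eq_max_of_norm_ne_norm hrest.ne', max_eq_left hrest.le]

lemma Polynomial.Monic.norm_eval_eq_pow {f : K[X]} (hf : f.Monic) {z : K} (hz : z ≠ 0)
    (h : ∀ j < f.natDegree, ‖f.coeff j‖ < ‖z‖ ^ (f.natDegree - j)) :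
    ‖f.eval z‖ = ‖z‖ ^ f.natDegree := by
  have hz0 : 0 < ‖z‖ := norm_pos_iff.2 hz
  rw [norm_eval_eq_of_forall_norm_lt (j := f.natDegree), hf.coeff_natDegree, one_mul, norm_pow]
  intro i hi
  rw [hf.coeff_natDegree, one_mul, norm_pow, norm_mul, norm_pow]
  rcases hi.lt_or_gt with hlt | hgt
  · calc ‖f.coeff i‖ * ‖z‖ ^ i < ‖z‖ ^ (f.natDegree - i) * ‖z‖ ^ i := by gcongr; exact h i hlt
      _ = ‖z‖ ^ f.natDegree := by rw [← pow_add, Nat.sub_add_cancel hlt.le]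
  · simp [coeff_eq_zero_of_natDegree_lt hgt, hz0]

lemma Polynomial.Monic.not_hasBoundedOrbit {f : K[X]} (hf : f.Monic) (hd : 2 ≤ f.natDegree)
    {t : ℝ} (ht : 1 < t) (hcoeff : ∀ j < f.natDegree, ‖f.coeff j‖ < t ^ (f.natDegree - j))
    {z : K} (hz : t ≤ ‖z‖) : ¬ HasBoundedOrbit (fun z => f.eval z) z := by
  refine not_hasBoundedOrbit_of_expanding ht (fun z hz => ?_) hz
  have hz1 : 1 ≤ ‖z‖ := ht.le.trans hz
  rw [hf.norm_eval_eq_pow (norm_pos_iff.1 (by linarith))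
    fun j hj => (hcoeff j hj).trans_le (by gcongr)]
  calc t * ‖z‖ ≤ ‖z‖ ^ 2 := by rw [sq]; gcongr
    _ ≤ ‖z‖ ^ f.natDegree := pow_le_pow_right₀ hz1 hd

lemma Multiset.norm_esymm_le {s : Multiset K} {r : ℝ} (hr : 0 ≤ r) (hs : ∀ x ∈ s, ‖x‖ ≤ r)
    (k : ℕ) : ‖s.esymm k‖ ≤ r ^ k := by
  rcases eq_or_ne (s.powersetCard k) 0 with h0 | hne
  · rw [Multiset.esymm, h0, Multiset.map_zero, Multiset.sum_zero, norm_zero]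
    positivity
  obtain ⟨t, ht, hle⟩ := IsUltrametricDist.exists_norm_multiset_sum_le (s.powersetCard k)
    (f := Multiset.prod)
  obtain ⟨hts, hcard⟩ := Multiset.mem_powersetCard.1 (ht hne)
  calc ‖s.esymm k‖ ≤ ‖t.prod‖ := hle
    _ = (t.map (normHom : K →*₀ ℝ)).prod := map_multiset_prod (normHom : K →*₀ ℝ) t
    _ ≤ r ^ k := hcard ▸ Multiset.prod_map_le_pow_card (fun x _ => norm_nonneg x)
        fun x hx => hs x (Multiset.mem_of_le hts hx)

lemma Polynomial.Monic.norm_coeff_le_of_hasBoundedOrbit {f : K[X]} (hf : f.Monic) {c : K}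
    (hc : 1 < ‖c‖) (horbit : HasBoundedOrbit (fun z => f.eval z) c) {k : ℕ} (hk : 0 < k)
    (hkd : k < f.natDegree)
    (hbound : ∀ j < f.natDegree, j ≠ k → ‖f.coeff j‖ ≤ ‖c‖ ^ (f.natDegree - j)) :
    ‖f.coeff k‖ ≤ ‖c‖ ^ (f.natDegree - k) := by
  set d := f.natDegree
  set r := ‖c‖
  by_contra! hlt
  set T := ‖f.coeff k‖ * r ^ k
  have hr0 : 0 < r := zero_lt_one.trans hc
  have hak : 0 < ‖f.coeff k‖ := (pow_pos hr0 _).trans hlt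
  have hrdT : r ^ d < T :=
    calc r ^ d = r ^ (d - k) * r ^ k := by rw [← pow_add, Nat.sub_add_cancel hkd.le]
      _ < T := mul_lt_mul_of_pos_right hlt (pow_pos hr0 k)
  have hrT : r < T := (le_self_pow₀ hc.le (by omega)).trans_lt hrdT
  have hTk : ‖f.coeff k * c ^ k‖ = T := by rw [norm_mul, norm_pow]
  have hfc : ‖f.eval c‖ = T := by
    rw [norm_eval_eq_of_forall_norm_lt (j := k), hTk]
    intro i hi
    rw [hTk, norm_mul, norm_pow]
    rcases lt_trichotomy i d with hid | rfl | hid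
    · calc ‖f.coeff i‖ * r ^ i ≤ r ^ (d - i) * r ^ i := by gcongr; exact hbound i hid hi
        _ = r ^ d := by rw [← pow_add, Nat.sub_add_cancel hid.le]
        _ < T := hrdT
    · rwa [hf.coeff_natDegree, norm_one, one_mul]
    · rw [coeff_eq_zero_of_natDegree_lt hid, norm_zero, zero_mul]
      positivity
  -- `f c` is larger than `c` and than every `|a_j|^(1/(d-j))`, so it escapes.
  refine hf.not_hasBoundedOrbit (by omega) (hc.trans hrT) (fun j hj => ?_) hfc.ge horbit.apply
  rcases eq_or_ne j k with rfl | hjk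
  · calc ‖f.coeff j‖ < T := lt_mul_of_one_lt_right hak (one_lt_pow₀ hc hk.ne')
      _ ≤ T ^ (d - j) := le_self_pow₀ (hc.trans hrT).le (by omega)
  · calc ‖f.coeff j‖ ≤ r ^ (d - j) := hbound j hj hjk
      _ < T ^ (d - j) := pow_lt_pow_left₀ hrT hr0.le (by omega)

variable [IsAlgClosed K]

lemma Polynomial.norm_coeff_le_of_forall_norm_root_le (g : K[X]) {r : ℝ} (hr : 0 ≤ r)
    (hroots : ∀ x, g.eval x = 0 → ‖x‖ ≤ r) {k : ℕ} (hk : k ≤ g.natDegree) :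
    ‖g.coeff k‖ ≤ ‖g.leadingCoeff‖ * r ^ (g.natDegree - k) := by
  rw [coeff_eq_esymm_roots_of_splits (IsAlgClosed.splits g) hk, norm_mul, norm_mul, norm_pow,
    norm_neg, norm_one, one_pow, mul_one]
  gcongr
  exact Multiset.norm_esymm_le hr (fun x hx => hroots x (isRoot_of_mem_roots hx)) _

lemma Polynomial.Monic.norm_natCast_mul_norm_coeff_le [CharZero K] {f : K[X]} (hf : f.Monic)
    {r : ℝ} (hr : 0 ≤ r) (hcrit : ∀ c, f.derivative.eval c = 0 → ‖c‖ ≤ r) {j : ℕ} (hj : 0 < j)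
    (hjd : j ≤ f.natDegree) :
    ‖(j : K)‖ * ‖f.coeff j‖ ≤ ‖(f.natDegree : K)‖ * r ^ (f.natDegree - j) := by
  obtain ⟨i, rfl⟩ : ∃ i, j = i + 1 := ⟨j - 1, by omega⟩
  have h := f.derivative.norm_coeff_le_of_forall_norm_root_le hr hcrit
    (k := i) (by rw [natDegree_derivative]; omega)
  rw [coeff_derivative, leadingCoeff_derivative, natDegree_derivative, hf.leadingCoeff, one_mul,
    norm_mul, mul_comm] at h
  rwa [Nat.sub_sub, add_comm 1 i, ← Nat.cast_add_one] at h

end Ultrametric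

section PadicNorm

variable {K : Type*} [NormedField K] {p : ℕ}

lemma norm_natCast_eq_padicNorm (hext : ∀ q : ℚ, ‖(q : K)‖ = padicNorm p q) (n : ℕ) :
    ‖(n : K)‖ = padicNorm p n := by
  exact_mod_cast hext n

lemma norm_natCast_le_one_of_padicNorm [Fact p.Prime]
    (hext : ∀ q : ℚ, ‖(q : K)‖ = padicNorm p q) (n : ℕ) : ‖(n : K)‖ ≤ 1 := by
  rw [norm_natCast_eq_padicNorm hext]
  exact_mod_cast padicNorm.of_nat n

lemma norm_natCast_eq_one_of_padicNorm [Fact p.Prime]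
    (hext : ∀ q : ℚ, ‖(q : K)‖ = padicNorm p q) {n : ℕ} (hn : ¬ p ∣ n) : ‖(n : K)‖ = 1 := by
  rw [norm_natCast_eq_padicNorm hext]
  exact_mod_cast (padicNorm.nat_eq_one_iff n).2 hn

lemma charZero_of_padicNorm [Fact p.Prime] (hext : ∀ q : ℚ, ‖(q : K)‖ = padicNorm p q) :
    CharZero K :=
  charZero_of_inj_zero fun n hn => by
    by_contra h0
    have h := norm_natCast_eq_padicNorm hext n
    rw [hn, norm_zero, eq_comm] at h
    exact padicNorm.nonzero (Nat.cast_ne_zero.2 h0) (by exact_mod_cast h)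

lemma Polynomial.Monic.norm_coeff_le_of_not_dvd [IsUltrametricDist K] [IsAlgClosed K]
    [Fact p.Prime] (hext : ∀ q : ℚ, ‖(q : K)‖ = padicNorm p q) {f : K[X]} (hf : f.Monic)
    {r : ℝ} (hr : 0 ≤ r) (hcrit : ∀ c, f.derivative.eval c = 0 → ‖c‖ ≤ r) {j : ℕ} (hj : 0 < j)
    (hjd : j ≤ f.natDegree) (hpj : ¬ p ∣ j) : ‖f.coeff j‖ ≤ r ^ (f.natDegree - j) := by
  have := charZero_of_padicNorm hext
  have h := hf.norm_natCast_mul_norm_coeff_le hr hcrit hj hjd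
  rw [norm_natCast_eq_one_of_padicNorm hext hpj, one_mul] at h
  exact h.trans (mul_le_of_le_one_left (by positivity) (norm_natCast_le_one_of_padicNorm hext _))

end PadicNorm

lemma Polynomial.Monic.two_le_natDegree {R : Type*} [Semiring R] [Nontrivial R] {f : R[X]}
    (hf : f.Monic) (h0 : f.eval 0 = 0) {c : R} (hc : f.derivative.eval c = 0) :
    2 ≤ f.natDegree := by
  by_contra! h
  interval_cases hd : f.natDegree
  · rw [hf.natDegree_eq_zero.1 hd, eval_one] at h0
    exact one_ne_zero h0
  · have h1 : f.coeff 1 = 1 := hd ▸ hf.coeff_natDegree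
    have hder : f.derivative = C 1 := by
      have hd' : f.derivative.natDegree = 0 := by have := natDegree_derivative_le f; omega
      rw [eq_C_of_natDegree_eq_zero hd', coeff_derivative, h1]
      simp
    simp [hder] at hc

lemma isGreatest_rpow_image_Icc {a : ℕ → ℝ} (ha : ∀ i, 0 ≤ a i) {d : ℕ} {r : ℝ} (hr : 0 ≤ r)
    (hle : ∀ i ∈ Set.Icc 1 (d - 1), a i ≤ r ^ (d - i))
    (heq : ∃ i ∈ Set.Icc 1 (d - 1), a i = r ^ (d - i)) :
    IsGreatest ((fun i : ℕ => a i ^ (1 / ((d : ℝ) - (i : ℝ)))) '' Set.Icc 1 (d - 1)) r := by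
  have hexp : ∀ i ∈ Set.Icc 1 (d - 1), 1 / ((d : ℝ) - (i : ℝ)) = ((d - i : ℕ) : ℝ)⁻¹ :=
    fun i hi => by rw [one_div, Nat.cast_sub (by grind)]
  constructor
  · obtain ⟨i, hi, hai⟩ := heq
    refine ⟨i, hi, ?_⟩
    simp only
    rw [hai, hexp i hi, Real.pow_rpow_inv_natCast hr (by grind)]
  · rintro _ ⟨i, hi, rfl⟩
    have hdi : (0 : ℝ) < (d - i : ℕ) := by norm_cast; grind
    simp only
    rw [hexp i hi, Real.rpow_inv_le_iff_of_pos (ha i) hr hdi, Real.rpow_natCast]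
    exact hle i hi

theorem stmt_6_general (K : Type*) [NormedField K] [IsAlgClosed K]
    (hna : IsNonarchimedean (fun x : K => ‖x‖))
    (p : ℕ) (hp : p.Prime)
    (hext : ∀ q : ℚ, ‖(q : K)‖ = (padicNorm p q : ℝ))
    (d : ℕ) (hdp : d < 2 * p)
    (f : K[X]) (hmonic : f.Monic) (hdeg : f.natDegree = d) (hf0 : f.eval 0 = 0)
    (hPCB : ∀ c : K, f.derivative.eval c = 0 →
      ∃ B : ℝ, ∀ n : ℕ, ‖(fun z => f.eval z)^[n] c‖ ≤ B)
    (c₁ : K) (hc₁ : f.derivative.eval c₁ = 0)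
    (hmax : ∀ c : K, f.derivative.eval c = 0 → ‖c‖ ≤ ‖c₁‖)
    (hbig : 1 < ‖c₁‖) :
    IsGreatest
      ((fun i : ℕ => ‖f.coeff i‖ ^ (1 / ((d : ℝ) - (i : ℝ)))) '' Set.Icc 1 (d - 1))
      ‖c₁‖ := by
  have := IsUltrametricDist.isUltrametricDist_of_isNonarchimedean_norm hna
  have : Fact p.Prime := ⟨hp⟩
  subst hdeg
  set r := ‖c₁‖
  have hcoeff0 : f.coeff 0 = 0 := by rw [coeff_zero_eq_eval_zero, hf0]
  have hcoprime : ∀ j < f.natDegree, j ≠ p → ‖f.coeff j‖ ≤ r ^ (f.natDegree - j) := by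
    intro j hjd hjp
    rcases Nat.eq_zero_or_pos j with rfl | hj0
    · rw [hcoeff0, norm_zero]
      positivity
    exact hmonic.norm_coeff_le_of_not_dvd hext (by positivity) hmax hj0 hjd.le
      fun h => hjp (Nat.eq_of_dvd_of_lt_two_mul hj0.ne' h (by omega))
  have hub : ∀ j < f.natDegree, ‖f.coeff j‖ ≤ r ^ (f.natDegree - j) := by
    intro j hjd
    by_cases hjp : j = p
    · subst hjp
      exact hmonic.norm_coeff_le_of_hasBoundedOrbit hbig (hPCB c₁ hc₁) hp.pos hjd hcoprime
    · exact hcoprime j hjd hjp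
  have hattained : ∃ i ∈ Set.Icc 1 (f.natDegree - 1), ‖f.coeff i‖ = r ^ (f.natDegree - i) := by
    by_contra! hne
    refine hmonic.not_hasBoundedOrbit (hmonic.two_le_natDegree hf0 hc₁) hbig
      (fun j hj => (hub j hj).lt_of_ne ?_) le_rfl (hPCB c₁ hc₁)
    rcases Nat.eq_zero_or_pos j with rfl | hj0
    · rw [hcoeff0, norm_zero]
      exact (pow_pos (zero_lt_one.trans hbig) _).ne
    · exact hne j ⟨hj0, by omega⟩
  exact isGreatest_rpow_image_Icc (fun i => norm_nonneg _) (norm_nonneg _)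
    (fun i hi => hub i (by grind)) hattained

/-- Let `p` be a prime with `p > d/2` and let
`f(z) = z^d + a_{d-1} z^{d-1} + ⋯ + a_1 z ∈ P_d` be post-critically bounded.
Let `c₁` be a critical point of maximal absolute value with `|c₁| > 1`. Then
`max_{1 ≤ i ≤ d-1} |a_i|^(1/(d-i)) = |c₁|`. -/
theorem stmt_6 (K : Type*) [NormedField K] [IsAlgClosed K] [CompleteSpace K]
    (hna : IsNonarchimedean (fun x : K => ‖x‖))
    (p : ℕ) (hp : p.Prime)
    (hext : ∀ q : ℚ, ‖(q : K)‖ = (padicNorm p q : ℝ))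
    (d : ℕ) (hdp : d < 2 * p)
    (f : K[X]) (hmonic : f.Monic) (hdeg : f.natDegree = d) (hf0 : f.eval 0 = 0)
    (hPCB : ∀ c : K, f.derivative.eval c = 0 →
      ∃ B : ℝ, ∀ n : ℕ, ‖(fun z => f.eval z)^[n] c‖ ≤ B)
    (c₁ : K) (hc₁ : f.derivative.eval c₁ = 0)
    (hmax : ∀ c : K, f.derivative.eval c = 0 → ‖c‖ ≤ ‖c₁‖)
    (hbig : 1 < ‖c₁‖) :
    IsGreatest
      ((fun i : ℕ => ‖f.coeff i‖ ^ (1 / ((d : ℝ) - (i : ℝ)))) '' Set.Icc 1 (d - 1))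
      ‖c₁‖ :=
  stmt_6_general K hna p hp hext d hdp f hmonic hdeg hf0 hPCB c₁ hc₁ hmax hbig
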